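/- The trilinear map ℝ^{2n} × ℝ^{2n} × ℝ^{2n} → ℝ^{2n} given by (X, Y, Z) ↦ [Ψ_α(X, [Y, W₀]), Z] (the bracket being the action of the lower-right 2n×2n block of Ψ_α(X,[Y,W₀]) on the column vector Z) equals, up to a nonzero scalar, the complete symmetrization of the map (X, Y, Z) ↦ ⟨X₁, Y₂⟩·(Z₁, −Z₂), where X = (X₁,X₂), etc., and ⟨·,·⟩ is the standard inner product on ℝⁿ. -/
import Mathlib


/-- The lower-right `2n×2n` block of `Ψ_α(X, [Y,W₀])`, as a matrix acting on
`ℝ^{2n} = ℝⁿ ⊕ ℝⁿ` (Lemma 3.6 of the paper). -/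
noncomputable def psiBlock {n : ℕ} (X Y : Fin n ⊕ Fin n → ℝ) :
    Matrix (Fin n ⊕ Fin n) (Fin n ⊕ Fin n) ℝ :=
  Matrix.of fun i j =>
    match i, j with
    | Sum.inl i, Sum.inl j =>
        (X (Sum.inl i) * Y (Sum.inr j) + Y (Sum.inl i) * X (Sum.inr j) +
          (if i = j then (∑ k, Y (Sum.inr k) * X (Sum.inl k)) +
            (∑ k, X (Sum.inr k) * Y (Sum.inl k)) else 0)) / 2
    | Sum.inl i, Sum.inr j =>
        (X (Sum.inl i) * Y (Sum.inl j) + Y (Sum.inl i) * X (Sum.inl j)) / 2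
    | Sum.inr i, Sum.inl j =>
        (-(X (Sum.inr i) * Y (Sum.inr j)) - Y (Sum.inr i) * X (Sum.inr j)) / 2
    | Sum.inr i, Sum.inr j =>
        (-(Y (Sum.inr i) * X (Sum.inl j)) - X (Sum.inr i) * Y (Sum.inl j) -
          (if i = j then (∑ k, Y (Sum.inr k) * X (Sum.inl k)) +
            (∑ k, X (Sum.inr k) * Y (Sum.inl k)) else 0)) / 2

/-- The trilinear map `(X,Y,Z) ↦ ⟨X₁,Y₂⟩·(Z₁, −Z₂)` on `ℝ^{2n} = ℝⁿ ⊕ ℝⁿ`. -/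
noncomputable def tMap {n : ℕ} (X Y Z : Fin n ⊕ Fin n → ℝ) : Fin n ⊕ Fin n → ℝ :=
  fun i =>
    match i with
    | Sum.inl i => (∑ k, X (Sum.inl k) * Y (Sum.inr k)) * Z (Sum.inl i)
    | Sum.inr i => -((∑ k, X (Sum.inl k) * Y (Sum.inr k)) * Z (Sum.inr i))

/-- the trilinear map `(X,Y,Z) ↦ [Ψ_α(X,[Y,W₀]), Z]` equals, up to a
nonzero scalar, the complete symmetrization of `(X,Y,Z) ↦ ⟨X₁,Y₂⟩·(Z₁,−Z₂)`. -/
theorem psiBlock_is_symmetrization (n : ℕ) :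
    ∃ c : ℝ, c ≠ 0 ∧ ∀ X Y Z : Fin n ⊕ Fin n → ℝ,
      (psiBlock X Y).mulVec Z =
        c • ((6 : ℝ)⁻¹ • (tMap X Y Z + tMap X Z Y + tMap Y X Z +
          tMap Y Z X + tMap Z X Y + tMap Z Y X)) := by
  have comm : ∀ f g : Fin n → ℝ, (∑ k, f k * g k) = ∑ k, g k * f k :=
    fun f g => Finset.sum_congr rfl fun _ _ => mul_comm _ _
  have key : ∀ (a : ℝ) (f g : Fin n → ℝ),
      (∑ x, a * (f x / 2) * g x) = a * ((∑ x, f x * g x) / 2) := by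
    intro a f g
    rw [Finset.sum_div, Finset.mul_sum]
    exact Finset.sum_congr rfl fun _ _ => by ring
  have key2 : ∀ (i : Fin n) (b : Fin n → ℝ),
      (∑ x, (if i = x then b x else 0) / 2) = b i / 2 := by
    intro i b
    rw [← Finset.sum_div, Finset.sum_ite_eq]
    simp
  refine ⟨3, by norm_num, fun X Y Z => ?_⟩
  funext i
  simp only [Matrix.mulVec, dotProduct, psiBlock, tMap, Matrix.of_apply,
    Fintype.sum_sum_type, Pi.smul_apply, Pi.add_apply, smul_eq_mul]
  cases i with
  | inl i =>
      simp only [add_mul, sub_mul, neg_mul, div_mul_eq_mul_div, ite_mul, zero_mul, add_div,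
        Finset.sum_add_distrib, mul_div_assoc]
      rw [key, key, key, key, key2,
        comm (fun k => Y (Sum.inr k)) (fun k => Z (Sum.inl k)),
        comm (fun k => X (Sum.inr k)) (fun k => Z (Sum.inl k)),
        comm (fun k => Y (Sum.inr k)) (fun k => X (Sum.inl k)),
        comm (fun k => X (Sum.inr k)) (fun k => Y (Sum.inl k))]
      ring
  | inr i =>
      simp only [add_mul, sub_mul, neg_mul, div_mul_eq_mul_div, ite_mul, zero_mul, add_div,
        sub_div, neg_div, Finset.sum_add_distrib, Finset.sum_sub_distrib, Finset.sum_neg_distrib, mul_div_assoc]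
      rw [key, key, key, key, key2,
        comm (fun k => Y (Sum.inr k)) (fun k => Z (Sum.inl k)),
        comm (fun k => X (Sum.inr k)) (fun k => Z (Sum.inl k)),
        comm (fun k => Y (Sum.inr k)) (fun k => X (Sum.inl k)),
        comm (fun k => X (Sum.inr k)) (fun k => Y (Sum.inl k))]
      ring
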